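/- Define b̆_n(i) for n ≥ 0 and i ≥ 0 by: b̆_0(i) = 1, b̆_1(i) = 2i+1, and b̆_n(i) = b̆_{n−1}(i) + 2·Σ_{j=0}^{i−1} b̆_{n−1}(j) for n ≥ 2. Then the double generating function satisfies the formal power series identity Σ_{n≥0} Σ_{i≥0} b̆_n(i) u^n v^i = Σ_{n≥0} u^n (1+v)^n / (1−v)^{n+1} = 1 / (1 − u − v − uv). -/

import Mathlib

/-- The recursively defined bounds `b̆_n(i)` of the cup-length case:
`b̆_0(i) = 1`, `b̆_1(i) = 2 i + 1`, and
`b̆_n(i) = b̆_{n-1}(i) + 2 ∑_{j < i} b̆_{n-1}(j)` for `n ≥ 2`. -/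
def bcup : ℕ → ℕ → ℕ
  | 0, _ => 1
  | 1, i => 2 * i + 1
  | n + 2, i => bcup (n + 1) i + 2 * ∑ j ∈ Finset.range i, bcup (n + 1) j

/-- The double generating function `∑_{n,i} b̆_n(i) uⁿ vⁱ` as a formal power series in
two variables `u = X 0`, `v = X 1`. -/
def bcupGF : MvPowerSeries (Fin 2) ℤ :=
  fun d => (bcup (d 0) (d 1) : ℤ)

/-!
Subtracting consecutive instances of the recurrence telescopes its sum into the local rule
`b̆_{n+1}(i+1) = b̆_{n+1}(i) + b̆_n(i+1) + b̆_n(i)`, valid for all `n ≥ 0`. Together with the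
boundary values `b̆_n(0) = b̆_0(i) = 1` it is the coefficientwise content of both
`(1 - v) B_{n+1}(v) = (1 + v) B_n(v)`, `(1 - v) B_0(v) = 1` for `B_n(v) = ∑_i b̆_n(i) vⁱ`,
and `(1 - u - v - uv) ∑_{n,i} b̆_n(i) uⁿ vⁱ = 1`.
-/

namespace MvPowerSeries

variable {σ R : Type*} [CommSemiring R]

theorem coeff_mul_X_eq_ite (φ : MvPowerSeries σ R) (s : σ) (d : σ →₀ ℕ) :
    coeff d (φ * X s) = if d s = 0 then 0 else coeff (d - Finsupp.single s 1) φ := by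
  simp only [X_def, coeff_mul_monomial, mul_one, Finsupp.single_le_iff, Nat.one_le_iff_ne_zero,
    ite_not]

end MvPowerSeries

theorem bcup_zero_left (i : ℕ) : bcup 0 i = 1 := rfl

theorem bcup_zero_right : ∀ n, bcup n 0 = 1
  | 0 | 1 => rfl
  | n + 2 => by simp [bcup, bcup_zero_right (n + 1)]

theorem bcup_succ_succ (n i : ℕ) :
    bcup (n + 1) (i + 1) = bcup (n + 1) i + bcup n (i + 1) + bcup n i := by
  cases n with
  | zero => simp only [bcup]; ring
  | succ n => simp only [bcup, Finset.sum_range_succ]; ring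

section

open PowerSeries

theorem mk_bcup_zero_mul_one_sub_X : mk (fun i => (bcup 0 i : ℤ)) * (1 - X) = 1 := by
  ext (_ | i) <;> simp [mul_sub, coeff_succ_mul_X, bcup_zero_left]

theorem mk_bcup_succ_mul_one_sub_X (n : ℕ) :
    mk (fun i => (bcup (n + 1) i : ℤ)) * (1 - X) = mk (fun i => (bcup n i : ℤ)) * (1 + X) := by
  ext (_ | i)
  · simp [mul_sub, mul_add, bcup_zero_right]
  · simp [mul_sub, mul_add, coeff_succ_mul_X, bcup_succ_succ]
    ring

theorem mk_bcup_mul_one_sub_X_pow (n : ℕ) :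
    mk (fun i => (bcup n i : ℤ)) * (1 - X) ^ (n + 1) = (1 + X) ^ n := by
  induction n with
  | zero => simpa using mk_bcup_zero_mul_one_sub_X
  | succ n ih =>
    calc mk (fun i => (bcup (n + 1) i : ℤ)) * (1 - X) ^ (n + 2)
        = mk (fun i => (bcup (n + 1) i : ℤ)) * (1 - X) * (1 - X) ^ (n + 1) := by ring
      _ = mk (fun i => (bcup n i : ℤ)) * (1 - X) ^ (n + 1) * (1 + X) := by
        rw [mk_bcup_succ_mul_one_sub_X]; ring
      _ = (1 + X) ^ (n + 1) := by rw [ih, pow_succ]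

end

theorem coeff_bcupGF (d : Fin 2 →₀ ℕ) : MvPowerSeries.coeff d bcupGF = bcup (d 0) (d 1) := rfl

open MvPowerSeries in
theorem bcupGF_mul_one_sub_X_sub_X_sub_X_mul_X : bcupGF * (1 - X 0 - X 1 - X 0 * X 1) = 1 := by
  ext d
  simp only [mul_sub, mul_one, ← mul_assoc, map_sub, coeff_mul_X_eq_ite, coeff_bcupGF, coeff_one,
    Finsupp.ext_iff, Fin.forall_fin_two, Finsupp.tsub_apply, Finsupp.single_eq_same,
    Finsupp.single_eq_of_ne, ne_eq, one_ne_zero, zero_ne_one, not_false_eq_true, tsub_zero,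
    Finsupp.coe_zero, Pi.zero_apply]
  rcases d 0 with _ | n <;> rcases d 1 with _ | i
  · simp [bcup_zero_left]
  · simp [bcup_zero_left]
  · simp [bcup_zero_right]
  · simp [bcup_succ_succ]; ring

/-- The middle expression `∑_n uⁿ (1+v)ⁿ/(1-v)^{n+1}` is read coefficientwise in `u`, and
both divisions are cleared by multiplying out. -/
theorem bcup_generating_function :
    (∀ n : ℕ,
      (PowerSeries.mk fun i => (bcup n i : ℤ)) * (1 - PowerSeries.X) ^ (n + 1) =
        (1 + PowerSeries.X) ^ n) ∧
    bcupGF * (1 - MvPowerSeries.X (0 : Fin 2) - MvPowerSeries.X 1 -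
        MvPowerSeries.X 0 * MvPowerSeries.X 1) = 1 := by
  exact ⟨mk_bcup_mul_one_sub_X_pow, bcupGF_mul_one_sub_X_sub_X_sub_X_mul_X⟩
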